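/- arXiv:math/0509688 — 2 statements merged into one kernel-verified Lean document; each statement's English description precedes it below -/
import Mathlib

section
/- Let M and N be two (p-1)×(p-1) matrices over ℤ[1/n] and let α = (α₁,…,α_{p-1})ᵀ ∈ ℤ[1/n][ξ]^{p-1}, where α₁,…,α_{p-1} are ℤ[1/n]-linearly independent. If αᵀ M ᾱ^{(i)} = αᵀ N ᾱ^{(i)} for all i = 1,…,p-1, then M = N. -/
open scoped ComplexConjugate

noncomputable section

/-- The subring `ℤ[1/n]` of `ℂ`. -/
def Rz (n : ℤ) : Subring ℂ := Subring.closure {((n : ℂ))⁻¹}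

/-- The subring `ℤ[1/n][x]` of `ℂ`. -/
def Rzx (n : ℤ) (x : ℂ) : Subring ℂ := Subring.closure {((n : ℂ))⁻¹, x}

lemma mem_Rzx (n : ℤ) (x : ℂ) : x ∈ Rzx n x :=
  Subring.subset_closure (Set.mem_insert_of_mem _ rfl)

/-!
Put `c := αᵀ (M - N)` and `τᵢ := conj ∘ γᵢ`. The hypothesis says `T c = 0` for the square
matrix `T = (τᵢ(αₗ))`. The `αₗ` are `p - 1 = [ℚ(ξ) : ℚ]` rationally independent elements of
`ℚ(ξ)`, so every element of `ℤ[1/n][ξ]` has a nonzero integer multiple in their `ℤ`-span; by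
Dedekind's independence of the distinct characters `τᵢ`, the rows of `T` are then independent.
So `T` is invertible, `c = 0`, and the independence of the `αₖ` over `ℤ[1/n]` gives `M = N`
column by column.
-/

open Module Submodule IntermediateField Matrix

theorem linearIndependent_ringHom_apply_of_exists_int_smul_eq_sum {R L ι κ : Type*} [CommRing R]
    [Field L] [CharZero L] [Fintype ι] [Fintype κ] {σ : ι → R →+* L} (hσ : Function.Injective σ)
    {α : κ → R}
    (hα : ∀ x : R, ∃ d : ℤ, d ≠ 0 ∧ ∃ m : κ → ℤ, d • x = ∑ l, m l • α l) :
    LinearIndependent L fun i l => σ i (α l) := by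
  rw [Fintype.linearIndependent_iff]
  intro g hg
  let f : R →+ L := ∑ i, (AddMonoidHom.mulLeft (g i)).comp (σ i).toAddMonoidHom
  have hf : ∀ x, f x = ∑ i, g i * σ i x := fun x => by simp [f]
  have hfα : ∀ l, f (α l) = 0 := fun l => by simpa [hf] using congrFun hg l
  have hf0 : ∀ x, f x = 0 := by
    intro x
    obtain ⟨d, hd, m, hx⟩ := hα x
    have hdx : d • f x = 0 := by
      rw [← map_zsmul, hx, map_sum]
      simp only [map_zsmul, hfα, smul_zero, Finset.sum_const_zero]
    exact (smul_eq_zero.1 hdx).resolve_left hd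
  have hinj : Function.Injective fun i => (σ i : R →* L) :=
    fun i j hij => hσ (RingHom.ext fun x => DFunLike.congr_fun hij x)
  refine Fintype.linearIndependent_iff.1 ((linearIndependent_monoidHom R L).comp _ hinj) g ?_
  funext x
  simpa [hf] using hf0 x

theorem exists_int_smul_eq_sum_of_mem_span_rat {V κ : Type*} [AddCommGroup V] [Module ℚ V]
    [Fintype κ] {v : κ → V} {x : V} (hx : x ∈ span ℚ (Set.range v)) :
    ∃ d : ℤ, d ≠ 0 ∧ ∃ m : κ → ℤ, d • x = ∑ l, m l • v l := by
  obtain ⟨c, rfl⟩ := (mem_span_range_iff_exists_fun ℚ).1 hx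
  obtain ⟨d, hd⟩ := IsLocalization.exist_integer_multiples_of_finite (nonZeroDivisors ℤ) c
  choose m hm using hd
  refine ⟨d, nonZeroDivisors.coe_ne_zero d, m, ?_⟩
  rw [Finset.smul_sum]
  refine Finset.sum_congr rfl fun l _ => ?_
  rw [← smul_assoc, ← hm l, eq_intCast, Int.cast_smul_eq_zsmul]

theorem finrank_adjoin_primitiveRoot {K : Type*} [Field K] [CharZero K] {p : ℕ} (hp : p.Prime)
    {ξ : K} (hξ : IsPrimitiveRoot ξ p) : finrank ℚ ℚ⟮ξ⟯ = p - 1 := by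
  rw [IntermediateField.adjoin.finrank (hξ.isIntegral hp.pos).tower_top,
    ← Polynomial.cyclotomic_eq_minpoly_rat hξ hp.pos, Polynomial.natDegree_cyclotomic,
    Nat.totient_prime hp]

theorem Rzx_le_adjoin (n : ℤ) (ξ : ℂ) : Rzx n ξ ≤ ℚ⟮ξ⟯.toSubring := by
  rw [Rzx, Subring.closure_le, Set.insert_subset_iff, Set.singleton_subset_iff]
  refine ⟨?_, mem_adjoin_simple_self ℚ ξ⟩
  exact ℚ⟮ξ⟯.inv_mem (ℚ⟮ξ⟯.intCast_mem n)

theorem exists_int_smul_eq_sum_of_linearIndependent_rat {p : ℕ} (hp : p.Prime) {n : ℤ} {ξ : ℂ}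
    (hξ : IsPrimitiveRoot ξ p) {α : Fin (p - 1) → Rzx n ξ}
    (hα : LinearIndependent ℚ fun l => (α l : ℂ)) (x : Rzx n ξ) :
    ∃ d : ℤ, d ≠ 0 ∧ ∃ m : Fin (p - 1) → ℤ, d • x = ∑ l, m l • α l := by
  have : FiniteDimensional ℚ ℚ⟮ξ⟯ := adjoin.finiteDimensional (hξ.isIntegral hp.pos).tower_top
  have hspan : span ℚ (Set.range fun l => (α l : ℂ)) = ℚ⟮ξ⟯.toSubalgebra.toSubmodule := by
    refine eq_of_le_of_finrank_eq (span_le.2 ?_) ?_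
    · exact Set.range_subset_iff.2 fun l => Rzx_le_adjoin n ξ (α l).2
    · rw [finrank_span_eq_card hα, Fintype.card_fin]
      exact (finrank_adjoin_primitiveRoot hp hξ).symm
  have hx : (x : ℂ) ∈ span ℚ (Set.range fun l => (α l : ℂ)) := by
    rw [hspan]
    exact Rzx_le_adjoin n ξ x.2
  obtain ⟨d, hd, m, hm⟩ := exists_int_smul_eq_sum_of_mem_span_rat hx
  exact ⟨d, hd, m, Subtype.ext (by simpa [zsmul_eq_mul] using hm)⟩

theorem injective_ringHom_of_apply_eq_pow {R L : Type*} [Semiring R] [CommRing L] {p : ℕ}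
    {ξ : L} (hξ : IsPrimitiveRoot ξ p) {γ : ℕ → R →+* L} {x : R}
    (hγ : ∀ j ∈ Finset.Icc 1 (p - 1), γ j x = ξ ^ j) :
    Function.Injective fun i : Fin (p - 1) => γ (i + 1) := by
  intro i j hij
  have hmem : ∀ i : Fin (p - 1), (i : ℕ) + 1 ∈ Finset.Icc 1 (p - 1) :=
    fun i => Finset.mem_Icc.2 ⟨by omega, i.isLt⟩
  have hpow : ξ ^ ((i : ℕ) + 1) = ξ ^ ((j : ℕ) + 1) := by
    rw [← hγ _ (hmem i), ← hγ _ (hmem j)]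
    exact DFunLike.congr_fun hij x
  have := hξ.pow_inj (by omega) (by omega) hpow
  exact Fin.ext (by omega)

theorem stmt0_general (p : ℕ) (hp : p.Prime) (n : ℤ)
    (ξ : ℂ) (hξ : IsPrimitiveRoot ξ p)
    (γ : ℕ → (↥(Rzx n ξ) →+* ℂ))
    (hγ : ∀ j ∈ Finset.Icc 1 (p - 1), γ j ⟨ξ, mem_Rzx n ξ⟩ = ξ ^ j)
    (M N : Matrix (Fin (p - 1)) (Fin (p - 1)) ℂ)
    (hM : ∀ k l, M k l ∈ Rz n) (hN : ∀ k l, N k l ∈ Rz n)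
    (α : Fin (p - 1) → ↥(Rzx n ξ))
    (hind : ∀ c : Fin (p - 1) → ℂ, (∀ k, c k ∈ Rz n) →
      (∑ k, c k * (α k : ℂ)) = 0 → ∀ k, c k = 0)
    (heq : ∀ i ∈ Finset.Icc 1 (p - 1),
      (∑ k, ∑ l, (α k : ℂ) * M k l * (starRingEnd ℂ) (γ i (α l))) =
      (∑ k, ∑ l, (α k : ℂ) * N k l * (starRingEnd ℂ) (γ i (α l)))) :
    M = N := by
  set a : Fin (p - 1) → ℂ := fun k => α k
  have ha : LinearIndependent ℚ a := by
    refine (LinearIndependent.iff_fractionRing ℤ ℚ).1 (Fintype.linearIndependent_iff.2 ?_)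
    intro g hg k
    have := hind (fun k => g k) (fun k => intCast_mem _ _) (by simpa [a, zsmul_eq_mul] using hg) k
    exact_mod_cast this
  set σ : Fin (p - 1) → (Rzx n ξ →+* ℂ) := fun i => (starRingEnd ℂ).comp (γ (i + 1))
  have hσ : Function.Injective σ := fun i j hij =>
    injective_ringHom_of_apply_eq_pow hξ hγ
      (RingHom.ext fun x => (starRingEnd ℂ).injective (DFunLike.congr_fun hij x))
  set T : Matrix (Fin (p - 1)) (Fin (p - 1)) ℂ := of fun i l => σ i (α l)
  have hT : IsUnit T := linearIndependent_rows_iff_isUnit.1 <|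
    linearIndependent_ringHom_apply_of_exists_int_smul_eq_sum hσ
      (exists_int_smul_eq_sum_of_linearIndependent_rat hp hξ ha)
  have hTc : T *ᵥ (a ᵥ* (M - N)) = 0 := by
    funext i
    have hi := heq (i + 1) (Finset.mem_Icc.2 ⟨by omega, i.isLt⟩)
    rw [Pi.zero_apply, mulVec, dotProduct_comm, ← dotProduct_mulVec, sub_mulVec, dotProduct_sub,
      sub_eq_zero]
    simpa [a, T, σ, dotProduct, mulVec, Finset.mul_sum, mul_assoc] using hi
  have hc : a ᵥ* (M - N) = 0 :=
    mulVec_injective_iff_isUnit.2 hT (by rw [hTc, mulVec_zero])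
  ext k l
  refine sub_eq_zero.1 (hind (fun k => M k l - N k l) (fun k => sub_mem (hM k l) (hN k l)) ?_ k)
  simpa [vecMul, dotProduct, mul_comm] using congrFun hc l

/-- Let `p` be an odd prime, `ξ` a primitive `p`-th root of unity and
`0 ≠ n ∈ ℤ`.  For `1 ≤ j ≤ p-1`, `γ j : ℤ[1/n][ξ] →+* ℂ` denotes the Galois embedding
determined by `ξ ↦ ξ^j` (so that the `i`-th conjugate `x̄^{(i)}` of `x̄` is `conj (γ i x)`,
since conjugation commutes with the Galois action).
If `M`, `N` are `(p-1) × (p-1)` matrices with entries in `ℤ[1/n]` and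
`α = (α₁, …, α_{p-1})ᵀ ∈ ℤ[1/n][ξ]^{p-1}` has `ℤ[1/n]`-linearly independent entries with
`αᵀ M ᾱ^{(i)} = αᵀ N ᾱ^{(i)}` for `i = 1, …, p-1`, then `M = N`. -/
theorem stmt0 (p : ℕ) (hp : p.Prime) (hodd : Odd p) (n : ℤ) (hn : n ≠ 0)
    (ξ : ℂ) (hξ : IsPrimitiveRoot ξ p)
    (γ : ℕ → (↥(Rzx n ξ) →+* ℂ))
    (hγ : ∀ j ∈ Finset.Icc 1 (p - 1), γ j ⟨ξ, mem_Rzx n ξ⟩ = ξ ^ j)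
    (M N : Matrix (Fin (p - 1)) (Fin (p - 1)) ℂ)
    (hM : ∀ k l, M k l ∈ Rz n) (hN : ∀ k l, N k l ∈ Rz n)
    (α : Fin (p - 1) → ↥(Rzx n ξ))
    (hind : ∀ c : Fin (p - 1) → ℂ, (∀ k, c k ∈ Rz n) →
      (∑ k, c k * (α k : ℂ)) = 0 → ∀ k, c k = 0)
    (heq : ∀ i ∈ Finset.Icc 1 (p - 1),
      (∑ k, ∑ l, (α k : ℂ) * M k l * (starRingEnd ℂ) (γ i (α l))) =
      (∑ k, ∑ l, (α k : ℂ) * N k l * (starRingEnd ℂ) (γ i (α l)))) :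
    M = N :=
  stmt0_general p hp n ξ hξ γ hγ M N hM hN α hind heq
end
end

section
/- Let 𝔞 ⊆ ℤ[1/n][ξ] be an ideal and a, b ∈ ℤ[1/n][ξ] nonzero with 𝔞𝔞̄ = (a) = (b). Then [𝔞, a] = [𝔞, b] if and only if a/b ∈ N(ℤ[1/n][ξ]*), i.e. a/b = uū for some unit u of ℤ[1/n][ξ]. -/
open scoped ComplexConjugate

noncomputable section

/-- Complex conjugation restricted to a conjugation-stable subring of `ℂ`. -/
def conjHom (S : Subring ℂ) (hc : ∀ y ∈ S, (starRingEnd ℂ) y ∈ S) : ↥S →+* ↥S :=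
  RingHom.codRestrict ((starRingEnd ℂ).comp S.subtype) S (fun y => hc y y.2)

/-- The equivalence relation on pairs: `(𝔞,a) ∼ (𝔟,b)` iff there are nonzero `λ, μ` with
`λ𝔞 = μ𝔟` and `λλ̄a = μμ̄b`. -/
def PairRel (S : Subring ℂ) (cR : ↥S →+* ↥S) (A B : Ideal ↥S × ↥S) : Prop :=
  ∃ lam mu : ↥S, lam ≠ 0 ∧ mu ≠ 0 ∧
    Ideal.span {lam} * A.1 = Ideal.span {mu} * B.1 ∧
    lam * cR lam * A.2 = mu * cR mu * B.2

/-!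
If `λ𝔞 = μ𝔞` then multiplying by `𝔞̄` gives `(λa) = (μa)`, so `μ = λw` for a unit `w`; cancelling
`λλ̄` from `λλ̄a = μμ̄b` leaves `a = ww̄b`. Conversely `a = uū b` is witnessed by `λ = 1`, `μ = u`.
-/

open Function Ideal

theorem associated_of_span_singleton_mul_eq {R : Type*} [CommRing R] [IsDomain R]
    {I J : Ideal R} {c lam mu : R} (hIJ : I * J = span {c}) (hc : c ≠ 0)
    (h : span {lam} * I = span {mu} * I) : Associated lam mu := by
  have hspan : span {lam * c} = span {mu * c} := by
    rw [← span_singleton_mul_span_singleton, ← span_singleton_mul_span_singleton, ← hIJ,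
      ← mul_assoc, ← mul_assoc, h]
  exact (span_singleton_eq_span_singleton.mp hspan).of_mul_right (Associated.refl c) hc

theorem exists_span_singleton_mul_eq_and_mul_eq_iff {R : Type*} [CommRing R] [IsDomain R]
    {σ : R →+* R} (hσ : Injective σ) {I J : Ideal R} {a b : R} (hIJ : I * J = span {a})
    (ha : a ≠ 0) :
    (∃ lam mu : R, lam ≠ 0 ∧ mu ≠ 0 ∧ span {lam} * I = span {mu} * I ∧
        lam * σ lam * a = mu * σ mu * b) ↔
      ∃ u : Rˣ, a = u * σ u * b := by
  constructor
  · rintro ⟨lam, mu, hlam, -, hI, hE⟩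
    obtain ⟨u, rfl⟩ := associated_of_span_singleton_mul_eq hIJ ha hI
    refine ⟨u, mul_left_cancel₀ (mul_ne_zero hlam ((map_ne_zero_iff σ hσ).2 hlam)) ?_⟩
    rw [hE, map_mul]
    ring
  · rintro ⟨u, rfl⟩
    refine ⟨1, u, one_ne_zero, u.ne_zero, ?_, ?_⟩
    · rw [span_singleton_one, span_singleton_eq_top.2 u.isUnit]
    · rw [map_one]
      ring

@[simp]
theorem coe_conjHom (S : Subring ℂ) (hc : ∀ y ∈ S, (starRingEnd ℂ) y ∈ S) (x : S) :
    (conjHom S hc x : ℂ) = conj (x : ℂ) :=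
  rfl

theorem conjHom_injective (S : Subring ℂ) (hc : ∀ y ∈ S, (starRingEnd ℂ) y ∈ S) :
    Injective (conjHom S hc) := fun _ _ h =>
  Subtype.ext <| star_injective (congrArg Subtype.val h)

theorem pairRel_self_iff (S : Subring ℂ) (hc : ∀ y ∈ S, (starRingEnd ℂ) y ∈ S) {I : Ideal S}
    {a b : S} (ha : a ≠ 0) (hb : b ≠ 0) (hIa : I * I.map (conjHom S hc) = span {a}) :
    PairRel S (conjHom S hc) (I, a) (I, b) ↔ ∃ u : Sˣ, (a : ℂ) / b = u * conj (u : ℂ) := by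
  rw [PairRel, exists_span_singleton_mul_eq_and_mul_eq_iff (conjHom_injective S hc) hIa ha]
  refine exists_congr fun u => ?_
  rw [div_eq_iff (by exact_mod_cast hb), Subtype.ext_iff]
  push_cast
  rw [coe_conjHom]

theorem stmt7_general (n : ℤ) (ξ : ℂ)
    (hc : ∀ y ∈ Rzx n ξ, (starRingEnd ℂ) y ∈ Rzx n ξ)
    (𝔞 : Ideal ↥(Rzx n ξ)) (a b : ↥(Rzx n ξ)) (ha : a ≠ 0) (hb : b ≠ 0)
    (hpa : 𝔞 * 𝔞.map (conjHom (Rzx n ξ) hc) = Ideal.span {a}) :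
    PairRel (Rzx n ξ) (conjHom (Rzx n ξ) hc) (𝔞, a) (𝔞, b) ↔
      ∃ u : (↥(Rzx n ξ))ˣ,
        (a : ℂ) / (b : ℂ) =
          ((u : ↥(Rzx n ξ)) : ℂ) * (starRingEnd ℂ) ((u : ↥(Rzx n ξ)) : ℂ) :=
  pairRel_self_iff (Rzx n ξ) hc ha hb hpa

/-- Let `p` be an odd prime, `ξ` a primitive `p`-th root of unity,
`0 ≠ n ∈ ℤ`.  Let `𝔞 ⊆ ℤ[1/n][ξ]` be an ideal and `a, b ≠ 0` with `𝔞𝔞̄ = (a) = (b)`.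
Then `[𝔞, a] = [𝔞, b]` iff `a/b = uū` for some unit `u` of `ℤ[1/n][ξ]`. -/
theorem stmt7 (p : ℕ) (hp : p.Prime) (hodd : Odd p) (n : ℤ) (hn : n ≠ 0)
    (ξ : ℂ) (hξ : IsPrimitiveRoot ξ p)
    (hc : ∀ y ∈ Rzx n ξ, (starRingEnd ℂ) y ∈ Rzx n ξ)
    (𝔞 : Ideal ↥(Rzx n ξ)) (a b : ↥(Rzx n ξ)) (ha : a ≠ 0) (hb : b ≠ 0)
    (hpa : 𝔞 * 𝔞.map (conjHom (Rzx n ξ) hc) = Ideal.span {a})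
    (hpb : 𝔞 * 𝔞.map (conjHom (Rzx n ξ) hc) = Ideal.span {b}) :
    PairRel (Rzx n ξ) (conjHom (Rzx n ξ) hc) (𝔞, a) (𝔞, b) ↔
      ∃ u : (↥(Rzx n ξ))ˣ,
        (a : ℂ) / (b : ℂ) =
          ((u : ↥(Rzx n ξ)) : ℂ) * (starRingEnd ℂ) ((u : ↥(Rzx n ξ)) : ℂ) :=
  stmt7_general n ξ hc 𝔞 a b ha hb hpa
end
end
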